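/- Assume β ∈ [0,1] and M > 10. There exists a constant C > 0 (depending only on β and M) such that for all ω₁ > 1 one has C¹²⁴[n⁰¹, n⁰¹, n⁰¹](ω₁) ≤ C · ω₁^{4β + 2 − M} and C¹³⁴[n⁰¹, n⁰¹, n⁰¹](ω₁) ≤ C · ω₁^{4β + 2 − M}. -/

import Mathlib

open MeasureTheory Real

noncomputable section

/-- Japanese bracket ⟨ω⟩ = (1 + ω²)^{1/2}. -/
def jb (ω : ℝ) : ℝ := Real.sqrt (1 + ω ^ 2)

/-- n⁰¹(ω) = ⟨ω⟩^{-M/2}. -/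
def n01 (M : ℝ) (ω : ℝ) : ℝ := jb ω ^ (-(M / 2))

/-- The operator C₂₁²³⁴, with ω₂ = ω₃ + ω₄ − ω₁. -/
def C21op (β : ℝ) (k l m : ℝ → ℝ) (ω₁ : ℝ) : ℝ :=
  64 * π ^ 3 * ω₁ ^ (β - 1/2) *
    ∫ ω₃ in (0:ℝ)..(ω₁ / 2), ∫ ω₄ in (ω₁ - ω₃)..ω₁,
      (ω₃ + ω₄ - ω₁) ^ (β + 1/2) * ω₃ ^ β * ω₄ ^ β *
        (k (ω₃ + ω₄ - ω₁) * l ω₃ * m ω₄)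

/-- The operator C₂₂²³⁴, with ω₂ = ω₃ + ω₄ − ω₁. -/
def C22op (β : ℝ) (k l m : ℝ → ℝ) (ω₁ : ℝ) : ℝ :=
  64 * π ^ 3 * ω₁ ^ (β - 1/2) *
    ∫ ω₃ in (ω₁ / 2)..ω₁, ∫ ω₄ in ω₃..ω₁,
      (ω₃ + ω₄ - ω₁) ^ (β + 1/2) * ω₃ ^ β * ω₄ ^ β *
        (k (ω₃ + ω₄ - ω₁) * l ω₃ * m ω₄)

/-- The operator C₃²³⁴, with ω₂ = ω₃ + ω₄ − ω₁. -/
def C3op (β : ℝ) (k l m : ℝ → ℝ) (ω₁ : ℝ) : ℝ :=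
  64 * π ^ 3 * ω₁ ^ (β - 1/2) *
    ∫ ω₃ in (0:ℝ)..ω₁, ∫ ω₄ in Set.Ioi ω₁,
      (ω₃ + ω₄ - ω₁) ^ β * ω₃ ^ (β + 1/2) * ω₄ ^ β *
        (k (ω₃ + ω₄ - ω₁) * l ω₃ * m ω₄)

/-- The operator C₁²³⁴, with ω₂ = ω₃ + ω₄ − ω₁. -/
def C1op (β : ℝ) (k l m : ℝ → ℝ) (ω₁ : ℝ) : ℝ :=
  64 * π ^ 3 * ω₁ ^ β *
    ∫ ω₃ in Set.Ioi ω₁, ∫ ω₄ in Set.Ioi ω₃,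
      (ω₃ + ω₄ - ω₁) ^ β * ω₃ ^ β * ω₄ ^ β *
        (k (ω₃ + ω₄ - ω₁) * l ω₃ * m ω₄)

/-- The full domain of integration {0 ≤ ω₃ ≤ ω₄, ω₃ + ω₄ ≥ ω₁} ⊂ ℝ². -/
def Dom (ω₁ : ℝ) : Set (ℝ × ℝ) := {p | 0 ≤ p.1 ∧ p.1 ≤ p.2 ∧ ω₁ ≤ p.1 + p.2}

/-- The cross-section factor min{√ω₁, √ω₂, √ω₃}, with ω₂ = ω₃ + ω₄ − ω₁,
where p = (ω₃, ω₄). -/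
def crossMin (ω₁ : ℝ) (p : ℝ × ℝ) : ℝ :=
  min (Real.sqrt ω₁) (min (Real.sqrt (p.1 + p.2 - ω₁)) (Real.sqrt p.1))

/-- The operator C^{j₁j₂j₃}[k,l,m](ω₁) where the factor is k(ω_{j₁}) l(ω_{j₂}) m(ω_{j₃}),
with ω₂ = ω₃ + ω₄ − ω₁ and p = (ω₃, ω₄); here the selection of frequencies is passed
as a function `sel : (ℝ × ℝ) → ℝ × ℝ × ℝ` giving (ω_{j₁}, ω_{j₂}, ω_{j₃}). -/
def Cfull (β : ℝ) (k l m : ℝ → ℝ) (sel : ℝ → ℝ × ℝ → ℝ × ℝ × ℝ) (ω₁ : ℝ) : ℝ :=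
  64 * π ^ 3 * ω₁ ^ (β - 1/2) *
    ∫ p in Dom ω₁,
      ((p.1 + p.2 - ω₁) * p.1 * p.2) ^ β * crossMin ω₁ p *
        (k (sel ω₁ p).1 * l (sel ω₁ p).2.1 * m (sel ω₁ p).2.2)

/-- C²³⁴[k,l,m](ω₁): integrand k(ω₂) l(ω₃) m(ω₄). -/
def C234 (β : ℝ) (k l m : ℝ → ℝ) : ℝ → ℝ :=
  Cfull β k l m (fun ω₁ p => (p.1 + p.2 - ω₁, p.1, p.2))

/-- C¹²⁴[k,l,m](ω₁): integrand k(ω₁) l(ω₂) m(ω₄). -/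
def C124 (β : ℝ) (k l m : ℝ → ℝ) : ℝ → ℝ :=
  Cfull β k l m (fun ω₁ p => (ω₁, p.1 + p.2 - ω₁, p.2))

/-- C¹³⁴[k,l,m](ω₁): integrand k(ω₁) l(ω₃) m(ω₄). -/
def C134 (β : ℝ) (k l m : ℝ → ℝ) : ℝ → ℝ :=
  Cfull β k l m (fun ω₁ p => (ω₁, p.1, p.2))

/-- C¹²³[k,l,m](ω₁): integrand k(ω₁) l(ω₂) m(ω₃). -/
def C123 (β : ℝ) (k l m : ℝ → ℝ) : ℝ → ℝ :=
  Cfull β k l m (fun ω₁ p => (ω₁, p.1 + p.2 - ω₁, p.1))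

/-! On the domain `0 ≤ ω₃ ≤ ω₄`, `ω₃ + ω₄ ≥ ω₁` one has `ω₄ ≥ ω₁ / 2` and `ω₂, ω₃ ≤ 2 ω₄`. In both
integrands, the frequency `u ∈ {ω₂, ω₃}` that carries both a weight `n⁰¹(u)` and the factor
`√u` from the cross-section absorbs `u^{β + 1/2}`; the remaining frequency is at most `2 ω₄`, and
`⟨ω₄⟩^{-3/2} ≤ ⟨ω₃⟩^{-3/2}` supplies decay in `ω₃`. So the integrand is at most
`2^β n⁰¹(ω₁) ⟨ω₃⟩^{-3/2} ⟨ω₄⟩^{2β + 3/2 - M/2}`, where `2β + 3/2 - M/2 < -1` because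
`M > 10 ≥ 4β + 6`. Integrating over `ω₃ ∈ ℝ` and `ω₄ ≥ ω₁ / 2` gives `O(ω₁^{2β + 5/2 - M/2})`;
with the prefactor `ω₁^{β - 1/2} n⁰¹(ω₁) ≤ ω₁^{β - 1/2 - M/2}` this is `O(ω₁^{3β + 2 - M})`. -/

open Set

theorem setIntegral_le_integral_mul_setIntegral {X Y : Type*} [MeasurableSpace X]
    [MeasurableSpace Y] {μ : Measure X} {ν : Measure Y} [SigmaFinite μ] [SigmaFinite ν]
    {S : Set (X × Y)} {B : Set Y} {F : X × Y → ℝ} {f : X → ℝ} {g : Y → ℝ}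
    (hS : MeasurableSet S) (hSB : ∀ p ∈ S, p.2 ∈ B) (hf : Integrable f μ) (hg : Integrable g ν)
    (hf0 : ∀ x, 0 ≤ f x) (hg0 : ∀ y, 0 ≤ g y) (hF0 : ∀ p ∈ S, 0 ≤ F p)
    (hF : ∀ p ∈ S, F p ≤ f p.1 * g p.2) :
    ∫ p in S, F p ∂μ.prod ν ≤ (∫ x, f x ∂μ) * ∫ y in B, g y ∂ν := by
  have hfg : Integrable (fun p : X × Y => f p.1 * g p.2) (μ.prod ν) := hf.mul_prod hg
  calc ∫ p in S, F p ∂μ.prod ν ≤ ∫ p in S, f p.1 * g p.2 ∂μ.prod ν :=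
        integral_mono_of_nonneg (ae_restrict_of_forall_mem hS hF0) hfg.integrableOn
          (ae_restrict_of_forall_mem hS hF)
    _ ≤ ∫ p in univ ×ˢ B, f p.1 * g p.2 ∂μ.prod ν :=
        setIntegral_mono_set hfg.integrableOn (ae_of_all _ fun p => mul_nonneg (hf0 _) (hg0 _))
          (LE.le.eventuallyLE fun p hp => ⟨trivial, hSB p hp⟩)
    _ = (∫ x, f x ∂μ) * ∫ y in B, g y ∂ν := by
        rw [setIntegral_prod_mul, Measure.restrict_univ]

lemma jb_pos (x : ℝ) : 0 < jb x := Real.sqrt_pos.2 (by positivity)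

lemma one_le_jb (x : ℝ) : 1 ≤ jb x :=
  Real.one_le_sqrt.2 (by nlinarith [sq_nonneg x])

lemma le_jb (x : ℝ) : x ≤ jb x :=
  Real.le_sqrt_of_sq_le (by linarith)

lemma jb_le_jb {x y : ℝ} (hx : 0 ≤ x) (hxy : x ≤ y) : jb x ≤ jb y :=
  Real.sqrt_le_sqrt (by nlinarith)

lemma rpow_le_jb_rpow {x s : ℝ} (hx : 0 ≤ x) (hs : 0 ≤ s) : x ^ s ≤ jb x ^ s :=
  Real.rpow_le_rpow hx (le_jb x) hs

lemma jb_rpow_nonneg (x s : ℝ) : 0 ≤ jb x ^ s := Real.rpow_nonneg (jb_pos x).le s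

lemma n01_nonneg (M x : ℝ) : 0 ≤ n01 M x := jb_rpow_nonneg x _

lemma integrable_jb_rpow {s : ℝ} (hs : s < -1) : Integrable (fun x : ℝ => jb x ^ s) := by
  have hdim : ((Module.finrank ℝ ℝ : ℕ) : ℝ) < -s := by
    rw [Module.finrank_self]; norm_num; linarith
  refine (integrable_rpow_neg_one_add_norm_sq (E := ℝ) (μ := volume) hdim).congr
    (ae_of_all _ fun x => ?_)
  simp only [jb, Real.sqrt_eq_rpow, ← Real.rpow_mul (by positivity : (0:ℝ) ≤ 1 + x ^ 2),
    Real.norm_eq_abs, sq_abs]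
  ring_nf

lemma integral_jb_rpow_pos {s : ℝ} (hs : s < -1) : 0 < ∫ x, jb x ^ s := by
  refine (integral_pos_iff_support_of_nonneg (fun x => jb_rpow_nonneg x s)
    (integrable_jb_rpow hs)).2 ?_
  rw [Function.support_eq_univ fun x => (Real.rpow_pos_of_pos (jb_pos x) s).ne',
    Measure.measure_univ_pos]
  exact NeZero.ne _

lemma setIntegral_Ici_jb_rpow_le {s c : ℝ} (hs : s < -1) (hc : 0 < c) :
    ∫ x in Ici c, jb x ^ s ≤ c ^ (s + 1) / (-(s + 1)) := by
  rw [integral_Ici_eq_integral_Ioi, div_neg, ← neg_div, ← integral_Ioi_rpow_of_lt hs hc]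
  refine integral_mono_of_nonneg (ae_of_all _ fun x => jb_rpow_nonneg x s)
    (integrableOn_Ioi_rpow_of_lt hs hc) ((ae_restrict_mem measurableSet_Ioi).mono fun x hx => ?_)
  have hx0 : 0 < x := hc.trans hx
  exact Real.rpow_le_rpow_of_nonpos hx0 (le_jb x) (by linarith)

lemma n01_le_jb_rpow_mul_jb_rpow {M s x y : ℝ} (hx : 0 ≤ x) (hxy : x ≤ y) (hs : 0 ≤ s) :
    n01 M y ≤ jb x ^ (-s) * jb y ^ (s - M / 2) := by
  rw [n01, show -(M / 2) = -s + (s - M / 2) by ring, Real.rpow_add (jb_pos y)]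
  gcongr ?_ * _
  · exact jb_rpow_nonneg y _
  · exact Real.rpow_le_rpow_of_nonpos (jb_pos x) (jb_le_jb hx hxy) (neg_nonpos.2 hs)

lemma rpow_mul_mul_n01_le_one {M β c u : ℝ} (hu : 0 ≤ u) (hc0 : 0 ≤ c) (hc : c ≤ √u)
    (hβ : 0 ≤ β) (hM : 2 * β + 1 ≤ M) : u ^ β * c * n01 M u ≤ 1 := by
  have hsqrt : √u ≤ jb u ^ (1 / 2 : ℝ) := by
    rw [Real.sqrt_eq_rpow]; exact rpow_le_jb_rpow hu (by norm_num)
  calc u ^ β * c * n01 M u ≤ jb u ^ β * jb u ^ (1 / 2 : ℝ) * jb u ^ (-(M / 2)) := by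
        refine mul_le_mul_of_nonneg_right ?_ (n01_nonneg M u)
        exact mul_le_mul (rpow_le_jb_rpow hu hβ) (hc.trans hsqrt) hc0 (jb_rpow_nonneg u β)
    _ = jb u ^ (β + 1 / 2 - M / 2) := by
        rw [← Real.rpow_add (jb_pos u), ← Real.rpow_add (jb_pos u)]; ring_nf
    _ ≤ 1 := Real.rpow_le_one_of_one_le_of_nonpos (one_le_jb u) (by linarith)

lemma rpow_mul_n01_mul_n01_le {M β c u v x y : ℝ} (hu : 0 ≤ u) (hv : 0 ≤ v) (hvy : v ≤ 2 * y)
    (hx : 0 ≤ x) (hxy : x ≤ y) (hc0 : 0 ≤ c) (hc : c ≤ √u) (hβ : 0 ≤ β) (hM : 2 * β + 1 ≤ M) :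
    (u * v * y) ^ β * c * (n01 M u * n01 M y) ≤
      2 ^ β * (jb x ^ (-(3 / 2) : ℝ) * jb y ^ (2 * β + 3 / 2 - M / 2)) := by
  have hy : 0 ≤ y := hx.trans hxy
  have hv_le : v ^ β ≤ 2 ^ β * jb y ^ β :=
    calc v ^ β ≤ (2 * y) ^ β := Real.rpow_le_rpow hv hvy hβ
      _ = 2 ^ β * y ^ β := Real.mul_rpow zero_le_two hy
      _ ≤ 2 ^ β * jb y ^ β := by gcongr; exact le_jb y
  have hyn : 0 ≤ y ^ β * n01 M y := mul_nonneg (Real.rpow_nonneg hy β) (n01_nonneg M y)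
  have hy_le : y ^ β * n01 M y ≤ jb y ^ β * (jb x ^ (-(3 / 2) : ℝ) * jb y ^ (3 / 2 - M / 2)) :=
    mul_le_mul (rpow_le_jb_rpow hy hβ) (n01_le_jb_rpow_mul_jb_rpow hx hxy (by norm_num))
      (n01_nonneg M y) (jb_rpow_nonneg y β)
  calc (u * v * y) ^ β * c * (n01 M u * n01 M y)
      = (u ^ β * c * n01 M u) * (v ^ β * (y ^ β * n01 M y)) := by
        rw [Real.mul_rpow (mul_nonneg hu hv) hy, Real.mul_rpow hu hv]; ring
    _ ≤ 1 * ((2 ^ β * jb y ^ β) *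
          (jb y ^ β * (jb x ^ (-(3 / 2) : ℝ) * jb y ^ (3 / 2 - M / 2)))) :=
        mul_le_mul (rpow_mul_mul_n01_le_one hu hc0 hc hβ hM)
          (mul_le_mul hv_le hy_le hyn (mul_nonneg (by positivity) (jb_rpow_nonneg y β)))
          (mul_nonneg (Real.rpow_nonneg hv β) hyn) zero_le_one
    _ = 2 ^ β * (jb x ^ (-(3 / 2) : ℝ) * jb y ^ (2 * β + 3 / 2 - M / 2)) := by
        rw [show 2 * β + 3 / 2 - M / 2 = β + (β + (3 / 2 - M / 2)) by ring,
          Real.rpow_add (jb_pos y), Real.rpow_add (jb_pos y)]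
        ring

lemma measurableSet_Dom (ω₁ : ℝ) : MeasurableSet (Dom ω₁) :=
  (measurableSet_le measurable_const measurable_fst).inter
    ((measurableSet_le measurable_fst measurable_snd).inter
      (measurableSet_le measurable_const (measurable_fst.add measurable_snd)))

lemma crossMin_nonneg (ω₁ : ℝ) (p : ℝ × ℝ) : 0 ≤ crossMin ω₁ p :=
  le_min (Real.sqrt_nonneg _) (le_min (Real.sqrt_nonneg _) (Real.sqrt_nonneg _))

lemma crossMin_le_sqrt_sub (ω₁ : ℝ) (p : ℝ × ℝ) : crossMin ω₁ p ≤ √(p.1 + p.2 - ω₁) :=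
  (min_le_right _ _).trans (min_le_left _ _)

lemma crossMin_le_sqrt_fst (ω₁ : ℝ) (p : ℝ × ℝ) : crossMin ω₁ p ≤ √p.1 :=
  (min_le_right _ _).trans (min_le_right _ _)

lemma setIntegral_Dom_le {F : ℝ × ℝ → ℝ} {ω₁ b D : ℝ} (hω : 0 < ω₁) (hb : b < -1) (hD : 0 ≤ D)
    (hF0 : ∀ p ∈ Dom ω₁, 0 ≤ F p)
    (hF : ∀ p ∈ Dom ω₁, F p ≤ D * (jb p.1 ^ (-(3 / 2) : ℝ) * jb p.2 ^ b)) :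
    ∫ p in Dom ω₁, F p ≤
      D * (∫ x, jb x ^ (-(3 / 2) : ℝ)) * ((ω₁ / 2) ^ (b + 1) / (-(b + 1))) := by
  have hsnd : ∀ p ∈ Dom ω₁, p.2 ∈ Ici (ω₁ / 2) := fun p ⟨_, hxy, hs⟩ => by
    simp only [mem_Ici]; linarith
  rw [Measure.volume_eq_prod]
  calc ∫ p in Dom ω₁, F p ∂volume.prod volume
      ≤ (∫ x, D * jb x ^ (-(3 / 2) : ℝ)) * ∫ y in Ici (ω₁ / 2), jb y ^ b :=
        setIntegral_le_integral_mul_setIntegral (measurableSet_Dom ω₁) hsnd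
          ((integrable_jb_rpow (by norm_num)).const_mul D) (integrable_jb_rpow hb)
          (fun x => mul_nonneg hD (jb_rpow_nonneg x _)) (fun y => jb_rpow_nonneg y b) hF0
          fun p hp => (hF p hp).trans_eq (mul_assoc _ _ _).symm
    _ ≤ D * (∫ x, jb x ^ (-(3 / 2) : ℝ)) * ((ω₁ / 2) ^ (b + 1) / (-(b + 1))) := by
        rw [integral_const_mul]
        exact mul_le_mul_of_nonneg_left (setIntegral_Ici_jb_rpow_le hb (by linarith))
          (mul_nonneg hD (integral_nonneg fun x => jb_rpow_nonneg x _))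

def boundConst (β M : ℝ) : ℝ :=
  64 * π ^ 3 * 2 ^ β * (∫ x, jb x ^ (-(3 / 2) : ℝ)) *
    (2 ^ (M / 2 - 2 * β - 5 / 2) / (M / 2 - 2 * β - 5 / 2))

lemma boundConst_pos {β M : ℝ} (hM : 4 * β + 5 < M) : 0 < boundConst β M := by
  have hI := integral_jb_rpow_pos (s := -(3 / 2)) (by norm_num)
  have ha : 0 < M / 2 - 2 * β - 5 / 2 := by linarith
  unfold boundConst
  positivity

lemma Cfull_n01_le {β M ω₁ : ℝ} {sel : ℝ → ℝ × ℝ → ℝ × ℝ × ℝ} (hβ : 0 ≤ β)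
    (hM : 4 * β + 5 < M) (hω : 1 < ω₁)
    (hsel : ∀ p ∈ Dom ω₁, ((p.1 + p.2 - ω₁) * p.1 * p.2) ^ β * crossMin ω₁ p *
        (n01 M (sel ω₁ p).1 * n01 M (sel ω₁ p).2.1 * n01 M (sel ω₁ p).2.2) ≤
      n01 M ω₁ * (2 ^ β * (jb p.1 ^ (-(3 / 2) : ℝ) * jb p.2 ^ (2 * β + 3 / 2 - M / 2)))) :
    Cfull β (n01 M) (n01 M) (n01 M) sel ω₁ ≤ boundConst β M * ω₁ ^ (4 * β + 2 - M) := by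
  have hω0 : 0 < ω₁ := by linarith
  set a := M / 2 - 2 * β - 5 / 2 with ha_def
  have ha : 0 < a := by linarith
  have hF0 : ∀ p ∈ Dom ω₁, 0 ≤ ((p.1 + p.2 - ω₁) * p.1 * p.2) ^ β * crossMin ω₁ p *
      (n01 M (sel ω₁ p).1 * n01 M (sel ω₁ p).2.1 * n01 M (sel ω₁ p).2.2) :=
    fun p ⟨hx, hxy, hs⟩ => mul_nonneg (mul_nonneg (Real.rpow_nonneg
      (mul_nonneg (mul_nonneg (by linarith) hx) (hx.trans hxy)) β) (crossMin_nonneg ω₁ p))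
      (mul_nonneg (mul_nonneg (n01_nonneg M _) (n01_nonneg M _)) (n01_nonneg M _))
  have hint := setIntegral_Dom_le hω0 (by linarith : 2 * β + 3 / 2 - M / 2 < -1)
    (mul_nonneg (n01_nonneg M ω₁) (by positivity)) hF0
    fun p hp => (hsel p hp).trans_eq (mul_assoc _ _ _).symm
  rw [show 2 * β + 3 / 2 - M / 2 + 1 = -a by ring, neg_neg] at hint
  have hn : n01 M ω₁ ≤ ω₁ ^ (-(M / 2)) :=
    Real.rpow_le_rpow_of_nonpos hω0 (le_jb ω₁) (by linarith)
  calc Cfull β (n01 M) (n01 M) (n01 M) sel ω₁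
      ≤ 64 * π ^ 3 * ω₁ ^ (β - 1 / 2) * (n01 M ω₁ * 2 ^ β * (∫ x, jb x ^ (-(3 / 2) : ℝ)) *
          ((ω₁ / 2) ^ (-a) / a)) := by
        unfold Cfull; gcongr
    _ = boundConst β M * (ω₁ ^ (β - 1 / 2) * n01 M ω₁ * ω₁ ^ (-a)) := by
        rw [Real.div_rpow hω0.le zero_le_two, Real.rpow_neg zero_le_two, boundConst, ← ha_def]
        field_simp
    _ ≤ boundConst β M * (ω₁ ^ (β - 1 / 2) * ω₁ ^ (-(M / 2)) * ω₁ ^ (-a)) := by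
        gcongr
        · exact (boundConst_pos hM).le
    _ = boundConst β M * ω₁ ^ (3 * β + 2 - M) := by
        rw [← Real.rpow_add hω0, ← Real.rpow_add hω0, ha_def]; ring_nf
    _ ≤ boundConst β M * ω₁ ^ (4 * β + 2 - M) := by
        gcongr
        · exact (boundConst_pos hM).le
        · exact hω.le
        · linarith

section Integrands

variable {β M ω₁ : ℝ} {p : ℝ × ℝ}

lemma integrand124_le (hp : p ∈ Dom ω₁) (hβ : 0 ≤ β) (hM : 2 * β + 1 ≤ M) :
    ((p.1 + p.2 - ω₁) * p.1 * p.2) ^ β * crossMin ω₁ p *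
        (n01 M ω₁ * n01 M (p.1 + p.2 - ω₁) * n01 M p.2) ≤
      n01 M ω₁ * (2 ^ β * (jb p.1 ^ (-(3 / 2) : ℝ) * jb p.2 ^ (2 * β + 3 / 2 - M / 2))) := by
  obtain ⟨hx, hxy, hs⟩ := hp
  rw [show ∀ c d e f g : ℝ, c * d * (e * f * g) = e * (c * d * (f * g)) by intros; ring]
  exact mul_le_mul_of_nonneg_left (rpow_mul_n01_mul_n01_le (by linarith) hx (by linarith) hx hxy
    (crossMin_nonneg ω₁ p) (crossMin_le_sqrt_sub ω₁ p) hβ hM) (n01_nonneg M ω₁)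

lemma integrand134_le (hω : 0 ≤ ω₁) (hp : p ∈ Dom ω₁) (hβ : 0 ≤ β) (hM : 2 * β + 1 ≤ M) :
    ((p.1 + p.2 - ω₁) * p.1 * p.2) ^ β * crossMin ω₁ p *
        (n01 M ω₁ * n01 M p.1 * n01 M p.2) ≤
      n01 M ω₁ * (2 ^ β * (jb p.1 ^ (-(3 / 2) : ℝ) * jb p.2 ^ (2 * β + 3 / 2 - M / 2))) := by
  obtain ⟨hx, hxy, hs⟩ := hp
  rw [show ∀ c d e f g : ℝ, c * d * (e * f * g) = e * (c * d * (f * g)) by intros; ring,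
    show (p.1 + p.2 - ω₁) * p.1 * p.2 = p.1 * (p.1 + p.2 - ω₁) * p.2 by ring]
  exact mul_le_mul_of_nonneg_left (rpow_mul_n01_mul_n01_le hx (by linarith) (by linarith) hx hxy
    (crossMin_nonneg ω₁ p) (crossMin_le_sqrt_fst ω₁ p) hβ hM) (n01_nonneg M ω₁)

end Integrands

/-- Upper bound: C¹²⁴[n⁰¹,n⁰¹,n⁰¹](ω₁), C¹³⁴[n⁰¹,n⁰¹,n⁰¹](ω₁) ≲ ω₁^{4β + 2 − M} for ω₁ > 1. -/
theorem C124_C134_upper_bound (β M : ℝ) (hβ0 : 0 ≤ β) (hβ1 : β ≤ 1) (hM : 10 < M) :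
    ∃ C : ℝ, 0 < C ∧ ∀ ω₁ : ℝ, 1 < ω₁ →
      C124 β (n01 M) (n01 M) (n01 M) ω₁ ≤ C * ω₁ ^ (4 * β + 2 - M) ∧
      C134 β (n01 M) (n01 M) (n01 M) ω₁ ≤ C * ω₁ ^ (4 * β + 2 - M) := by
  have hM₁ : 4 * β + 5 < M := by linarith
  have hM₂ : 2 * β + 1 ≤ M := by linarith
  refine ⟨boundConst β M, boundConst_pos hM₁, fun ω₁ hω => ⟨?_, ?_⟩⟩
  · exact Cfull_n01_le hβ0 hM₁ hω fun p hp => integrand124_le hp hβ0 hM₂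
  · exact Cfull_n01_le hβ0 hM₁ hω fun p hp => integrand134_le (by linarith) hp hβ0 hM₂
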